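/- Let q ≥ 2 and let t, w, e be positive integers with e ≤ w − 1, 2·binom(w, w−e) ≥ binom(w−t−1, w−e) + binom(w+t, w−e), and n ≥ t. Then every q-ary (n, t, w, e)-CPECC code of size b satisfies b · binom(w+t, w−e) ≤ (q−1)^{w−e} · binom(n, w−e). -/

import Mathlib

open Finset

/-- The support of a `q`-ary word `x : Fin n → Fin q`. -/
def qsupp {n q : ℕ} (x : Fin n → Fin q) : Finset (Fin n) :=
  Finset.univ.filter fun i => (x i : ℕ) ≠ 0

/-- The (Hamming) weight of a `q`-ary word. -/
def qwt {n q : ℕ} (x : Fin n → Fin q) : ℕ := (qsupp x).card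

/-- A `q`-ary `(n,t,w,e)`-LPECC code of size `b`: pairwise disjoint nonempty
codesets `P i ⊆ Q^n` satisfying Properties A_q(t), B_q(w), C_q(e). -/
def IsQaryLPECC (q n t w e : ℕ) {b : ℕ}
    (P : Fin b → Finset (Fin n → Fin q)) : Prop :=
  (∀ i, (P i).Nonempty) ∧
  (∀ i j : Fin b, i ≠ j → Disjoint (P i) (P j)) ∧
  (∀ T : Finset (Fin n), T.card = t → ∀ i, ∃ x ∈ P i, Disjoint (qsupp x) T) ∧
  (∀ i, ∀ x ∈ P i, qwt x ≤ w) ∧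
  (∀ i j : Fin b, i ≠ j → ∀ x ∈ P i, ∀ y ∈ P j, 2 * e + 1 ≤ hammingDist x y)

/-!
Put `k = w - e`. Zeroing all but `k` nonzero coordinates of a codeword `x` of a class gives
words of weight `k` at distance at most `e` from `x`; by Property C these word shadows of
distinct classes are disjoint, and there are only `(q - 1) ^ k * C(n, k)` words of weight `k`.
So it suffices that each shadow has at least `C(w + t, k)` elements, which is a statement
about the `w`-uniform family of supports of a class, in which some member misses any given
`t`-set. For `k = 1` the supports cover at least `w + t` points. Otherwise, either two supports
meet in at most `w - t - 1` points, and the binomial hypothesis says that their `k`-subsets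
alone are numerous enough; or any two meet in at least `w - t` points. Then the binomial
hypothesis forces `3 * t ≤ w`, which makes all supports lie in one `(w + t)`-set `W`; every
`w`-subset of `W` is then a support, so every `k`-subset of `W` is covered.
-/

namespace Nat

theorem pow_mul_choose_le_pow_mul_choose {w m : ℕ} (hwm : w ≤ m) (k : ℕ) :
    m ^ k * w.choose k ≤ w ^ k * m.choose k := by
  induction k with
  | zero => simp
  | succ k ih =>
    have hsub : m * (w - k) ≤ w * (m - k) := by
      rcases le_or_gt k w with hkw | hwk
      · zify [hkw, hkw.trans hwm]
        nlinarith
      · simp [Nat.sub_eq_zero_of_le hwk.le]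
    refine Nat.le_of_mul_le_mul_right ?_ k.succ_pos
    calc m ^ (k + 1) * w.choose (k + 1) * (k + 1)
        = m * (w - k) * (m ^ k * w.choose k) := by rw [mul_assoc, choose_succ_right_eq]; ring
      _ ≤ w * (m - k) * (w ^ k * m.choose k) := Nat.mul_le_mul hsub ih
      _ = w ^ (k + 1) * m.choose (k + 1) * (k + 1) := by
        rw [mul_assoc (w ^ (k + 1)), choose_succ_right_eq]; ring

theorem three_mul_le_of_choose_add_choose_le {t w k : ℕ} (hk : 2 ≤ k) (hkw : k < w)
    (h : (w - t - 1).choose k + (w + t).choose k ≤ 2 * w.choose k) : 3 * t ≤ w := by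
  by_contra! hlt
  rcases hk.eq_or_lt with rfl | hk3
  -- for `k = 2` and `t < w` the hypothesis reads `t ^ 2 + t + 1 ≤ w`
  · have hq : ((w - t - 1).choose 2 + (w + t).choose 2 : ℚ) ≤ 2 * w.choose 2 := by
      exact_mod_cast h
    simp only [cast_choose_two] at hq
    rcases le_or_gt w t with hwt | htw
    · rw [Nat.sub_eq_zero_of_le (by omega)] at hq
      have : (w : ℚ) ≤ t := by exact_mod_cast hwt
      have : (3 : ℚ) ≤ w := by exact_mod_cast hkw
      push_cast at hq
      nlinarith
    · rw [Nat.cast_sub (by omega), Nat.cast_sub (by omega)] at hq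
      have : (w : ℚ) < 3 * t := by exact_mod_cast hlt
      push_cast at hq
      nlinarith [sq_nonneg ((t : ℚ) - 1)]
  -- for `k ≥ 3`, `C(w + t, k) ≥ ((w + t) / w) ^ k * C(w, k)`, `(w + t) / w > 4 / 3`, `(4 / 3) ^ 3 > 2`
  · have hw : 0 < w := by omega
    have hcube : 2 * w ^ 3 < (w + t) ^ 3 := by
      have : (4 * w) ^ 3 < (3 * (w + t)) ^ 3 := Nat.pow_lt_pow_left (by omega) (by norm_num)
      rw [mul_pow, mul_pow] at this
      omega
    have hpow : 2 * w ^ k < (w + t) ^ k := by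
      obtain ⟨j, rfl⟩ : ∃ j, k = j + 3 := ⟨k - 3, by omega⟩
      calc 2 * w ^ (j + 3) = 2 * w ^ 3 * w ^ j := by ring
        _ < (w + t) ^ 3 * w ^ j := Nat.mul_lt_mul_of_pos_right hcube (by positivity)
        _ ≤ (w + t) ^ 3 * (w + t) ^ j := by gcongr; omega
        _ = (w + t) ^ (j + 3) := by ring
    have hpos : 0 < w.choose k := Nat.choose_pos hkw.le
    have : w ^ k * (2 * w.choose k) < w ^ k * (2 * w.choose k) :=
      calc w ^ k * (2 * w.choose k) = 2 * w ^ k * w.choose k := by ring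
        _ < (w + t) ^ k * w.choose k := Nat.mul_lt_mul_of_pos_right hpow hpos
        _ ≤ w ^ k * (w + t).choose k :=
          pow_mul_choose_le_pow_mul_choose (Nat.le_add_right w t) k
        _ ≤ w ^ k * (2 * w.choose k) := Nat.mul_le_mul_left _ (by omega)
    exact lt_irrefl _ this

end Nat

namespace Finset

variable {α : Type*}

/-- Property A(t) for the family of supports of a codeset. -/
def Avoids (𝒜 : Finset (Finset α)) (t : ℕ) : Prop :=
  ∀ T : Finset α, #T = t → ∃ A ∈ 𝒜, Disjoint A T

theorem Avoids.nonempty [Fintype α] {𝒜 : Finset (Finset α)} {t : ℕ} (h : 𝒜.Avoids t)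
    (ht : t ≤ Fintype.card α) : 𝒜.Nonempty := by
  obtain ⟨T, -, hT⟩ := exists_subset_card_eq (s := (univ : Finset α)) (by simpa using ht)
  obtain ⟨A, hA, -⟩ := h T hT
  exact ⟨A, hA⟩

variable [DecidableEq α]

theorem sdiff_subset_of_disjoint_of_card_le {S T z : Finset α} (hz : Disjoint z T)
    (hTS : T ⊆ S) (hcard : #S - #T ≤ #(z ∩ S)) : S \ T ⊆ z := by
  have hsub : z ∩ S ⊆ S \ T := fun a ha =>
    mem_sdiff.2 ⟨(mem_inter.1 ha).2, disjoint_left.1 hz (mem_inter.1 ha).1⟩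
  rw [← eq_of_subset_of_card_le hsub (by rwa [card_sdiff_of_subset hTS])]
  exact inter_subset_left

theorem sdiff_subset_of_disjoint_of_card_inter_le {S T y z : Finset α} {t w : ℕ}
    (hy : #y = w) (hT : T ⊆ y ∩ S) (hTt : #T = t) (hz : Disjoint z T)
    (hyz : w - t ≤ #(y ∩ z)) : y \ S ⊆ z := by
  have hsplit : y ∩ z ⊆ ((y ∩ S) \ T) ∪ ((y \ S) ∩ z) := by
    intro a ha
    obtain ⟨hay, haz⟩ := mem_inter.1 ha
    by_cases haS : a ∈ S
    · exact mem_union_left _ (mem_sdiff.2 ⟨mem_inter.2 ⟨hay, haS⟩, disjoint_left.1 hz haz⟩)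
    · exact mem_union_right _ (mem_inter.2 ⟨mem_sdiff.2 ⟨hay, haS⟩, haz⟩)
  have hT' : #((y ∩ S) \ T) = #(y ∩ S) - t := by rw [card_sdiff_of_subset hT, hTt]
  have hle := (card_le_card hsplit).trans (card_union_le _ _)
  have hy' := card_inter_add_card_sdiff y S
  have hTy := card_le_card hT
  have heq : (y \ S) ∩ z = y \ S :=
    eq_of_subset_of_card_le inter_subset_left (by omega)
  exact heq ▸ inter_subset_right

theorem choose_add_choose_le_card_union_add_choose (A B : Finset α) (k : ℕ) :
    (#A).choose k + (#B).choose k ≤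
      #(A.powersetCard k ∪ B.powersetCard k) + (#(A ∩ B)).choose k := by
  have hinter : A.powersetCard k ∩ B.powersetCard k ⊆ (A ∩ B).powersetCard k := by
    intro K hK
    simp only [mem_inter, mem_powersetCard] at hK ⊢
    exact ⟨subset_inter hK.1.1 hK.2.1, hK.1.2⟩
  have := card_union_add_card_inter (A.powersetCard k) (B.powersetCard k)
  have := card_le_card hinter
  simp only [card_powersetCard] at *
  omega

variable {𝒜 : Finset (Finset α)} {t w k : ℕ}

theorem Avoids.add_le_card [Fintype α] (h : 𝒜.Avoids t)
    (h𝒜 : (𝒜 : Set (Finset α)).Sized w) (hw : 1 ≤ w) (ht : t ≤ Fintype.card α)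
    {W : Finset α} (hW : ∀ A ∈ 𝒜, A ⊆ W) : w + t ≤ #W := by
  by_contra! hWt
  obtain ⟨T, hTt, hWT⟩ : ∃ T : Finset α, #T = t ∧ #(W \ T) < w := by
    rcases le_total #W t with hWt' | htW
    · obtain ⟨T, hWT, -, hT⟩ := exists_subsuperset_card_eq (subset_univ W) hWt' (by simpa)
      exact ⟨T, hT, by simp [sdiff_eq_empty_iff_subset.2 hWT]; omega⟩
    · obtain ⟨T, hTW, hT⟩ := exists_subset_card_eq htW
      exact ⟨T, hT, by rw [card_sdiff_of_subset hTW]; omega⟩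
  obtain ⟨A, hA, hAT⟩ := h T hTt
  have hAW : A ⊆ W \ T := subset_sdiff.2 ⟨hW A hA, hAT⟩
  have := card_le_card hAW
  rw [h𝒜 hA] at this
  omega

theorem Avoids.powersetCard_subset_biUnion (h : 𝒜.Avoids t)
    (h𝒜 : (𝒜 : Set (Finset α)).Sized w) {W : Finset α} (hW : ∀ A ∈ 𝒜, A ⊆ W)
    (hWw : #W ≤ w + t) (hkW : k + t ≤ #W) :
    W.powersetCard k ⊆ 𝒜.biUnion (powersetCard k) := by
  intro K hK
  obtain ⟨hKW, hKk⟩ := mem_powersetCard.1 hK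
  obtain ⟨T, hT, hTt⟩ := exists_subset_card_eq (s := W \ K) (n := t)
    (by rw [card_sdiff_of_subset hKW]; omega)
  obtain ⟨A, hA, hAT⟩ := h T hTt
  have hTW : T ⊆ W := hT.trans sdiff_subset
  have hAeq : A = W \ T := eq_of_subset_of_card_le (subset_sdiff.2 ⟨hW A hA, hAT⟩)
    (by rw [card_sdiff_of_subset hTW, h𝒜 hA]; omega)
  refine mem_biUnion.2 ⟨A, hA, mem_powersetCard.2 ⟨?_, hKk⟩⟩
  rw [hAeq]
  exact subset_sdiff.2 ⟨hKW, disjoint_of_subset_right hT disjoint_sdiff⟩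

theorem Avoids.exists_card_le_forall_subset (h : 𝒜.Avoids t)
    (h𝒜 : (𝒜 : Set (Finset α)).Sized w)
    (hinter : ∀ A ∈ 𝒜, ∀ B ∈ 𝒜, w - t ≤ #(A ∩ B)) (htw : 3 * t ≤ w)
    {S : Finset α} (hS : S ∈ 𝒜) : ∃ W, #W ≤ w + t ∧ ∀ A ∈ 𝒜, A ⊆ W := by
  obtain ⟨T₀, hT₀S, hT₀⟩ := exists_subset_card_eq (s := S) (n := t) (by rw [h𝒜 hS]; omega)
  obtain ⟨z₀, hz₀, hz₀T⟩ := h T₀ hT₀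
  refine ⟨S ∪ z₀, ?_, fun y hy => ?_⟩
  · have := card_union_add_card_inter S z₀
    have := hinter S hS z₀ hz₀
    rw [h𝒜 hS, h𝒜 hz₀] at *
    omega
  -- `3 * t ≤ w` leaves room in `y ∩ S` for a `t`-set `T` missing `T₀`; the member `z` missing `T`
  -- then satisfies `y \ S ⊆ z` and `z \ S ⊆ z₀`
  obtain ⟨T, hT, hTt⟩ := exists_subset_card_eq (s := (y ∩ S) \ T₀) (n := t) (by
    have := le_card_sdiff T₀ (y ∩ S)
    have := hinter y hy S hS
    omega)
  obtain ⟨z, hz, hzT⟩ := h T hTt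
  have hTyS : T ⊆ y ∩ S := hT.trans sdiff_subset
  have hyz : y \ S ⊆ z := sdiff_subset_of_disjoint_of_card_inter_le (h𝒜 hy) hTyS hTt hzT
    (hinter y hy z hz)
  have hT₀z : T₀ ⊆ z ∩ S := by
    refine subset_inter ((subset_sdiff.2 ⟨hT₀S, ?_⟩).trans
      (sdiff_subset_of_disjoint_of_card_le hzT (hTyS.trans inter_subset_right) ?_)) hT₀S
    · exact disjoint_of_subset_right hT disjoint_sdiff
    · rw [h𝒜 hS, hTt, inter_comm]
      exact hinter S hS z hz
  have hzz₀ : z \ S ⊆ z₀ := sdiff_subset_of_disjoint_of_card_inter_le (h𝒜 hz) hT₀z hT₀ hz₀T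
    (hinter z hz z₀ hz₀)
  intro a hay
  by_cases haS : a ∈ S
  · exact mem_union_left _ haS
  · have haz : a ∈ z := hyz (mem_sdiff.2 ⟨hay, haS⟩)
    exact mem_union_right _ (hzz₀ (mem_sdiff.2 ⟨haz, haS⟩))

theorem Avoids.choose_le_card_biUnion_powersetCard [Fintype α] (h : 𝒜.Avoids t)
    (h𝒜 : (𝒜 : Set (Finset α)).Sized w) (ht : t ≤ Fintype.card α) (hk : 1 ≤ k) (hkw : k < w)
    (hcond : (w - t - 1).choose k + (w + t).choose k ≤ 2 * w.choose k) :
    (w + t).choose k ≤ #(𝒜.biUnion (powersetCard k)) := by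
  have hcover : ∀ W : Finset α, (∀ A ∈ 𝒜, A ⊆ W) →
      W.powersetCard k ⊆ 𝒜.biUnion (powersetCard k) →
      (w + t).choose k ≤ #(𝒜.biUnion (powersetCard k)) := fun W hW hsub => calc
    (w + t).choose k ≤ (#W).choose k :=
      Nat.choose_le_choose k (h.add_le_card h𝒜 (by omega) ht hW)
    _ = #(W.powersetCard k) := (card_powersetCard k W).symm
    _ ≤ _ := card_le_card hsub
  obtain ⟨S, hS⟩ := h.nonempty ht
  rcases hk.eq_or_lt with rfl | hk2
  · refine hcover (𝒜.sup id) (fun A hA => le_sup (f := id) hA) fun K hK => ?_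
    obtain ⟨a, rfl⟩ := card_eq_one.1 (mem_powersetCard.1 hK).2
    obtain ⟨A, hA, haA⟩ := mem_sup.1 (singleton_subset_iff.1 (mem_powersetCard.1 hK).1)
    exact mem_biUnion.2 ⟨A, hA, mem_powersetCard.2 ⟨singleton_subset_iff.2 haA, card_singleton a⟩⟩
  by_cases hinter : ∀ A ∈ 𝒜, ∀ B ∈ 𝒜, w - t ≤ #(A ∩ B)
  · obtain ⟨W, hWw, hW⟩ := h.exists_card_le_forall_subset h𝒜 hinter
      (Nat.three_mul_le_of_choose_add_choose_le hk2 hkw hcond) hS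
    exact hcover W hW (h.powersetCard_subset_biUnion h𝒜 hW hWw
      (by have := h.add_le_card h𝒜 (by omega) ht hW; omega))
  · push Not at hinter
    obtain ⟨A, hA, B, hB, hAB⟩ := hinter
    have hunion : A.powersetCard k ∪ B.powersetCard k ⊆ 𝒜.biUnion (powersetCard k) :=
      union_subset (subset_biUnion_of_mem _ hA) (subset_biUnion_of_mem _ hB)
    have := choose_add_choose_le_card_union_add_choose A B k
    have := Nat.choose_le_choose k (show #(A ∩ B) ≤ w - t - 1 by omega)
    have := card_le_card hunion
    rw [h𝒜 hA, h𝒜 hB] at *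
    omega

end Finset

section QaryWords

variable {n q : ℕ} [NeZero q]

theorem mem_qsupp {x : Fin n → Fin q} {j : Fin n} : j ∈ qsupp x ↔ x j ≠ 0 := by
  simp [qsupp]

theorem qsupp_piecewise {x : Fin n → Fin q} {K : Finset (Fin n)} (hK : K ⊆ qsupp x) :
    qsupp (K.piecewise x 0) = K := by
  ext j
  by_cases hj : j ∈ K
  · simpa [mem_qsupp, hj] using mem_qsupp.1 (hK hj)
  · simp [mem_qsupp, hj]

theorem hammingDist_piecewise_le (x : Fin n → Fin q) (K : Finset (Fin n)) :
    hammingDist x (K.piecewise x 0) ≤ #(qsupp x \ K) := by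
  refine card_le_card fun j hj => ?_
  have hj : x j ≠ K.piecewise x 0 j := (mem_filter.1 hj).2
  by_cases hjK : j ∈ K
  · simp [hjK] at hj
  · simp_all [mem_qsupp]

theorem card_filter_qsupp_eq (K : Finset (Fin n)) :
    #{z : Fin n → Fin q | qsupp z = K} = (q - 1) ^ #K := by
  have : ({z : Fin n → Fin q | qsupp z = K} : Finset _) =
      Fintype.piFinset fun j => if j ∈ K then univ.erase 0 else {0} := by
    ext z
    simp only [mem_filter, mem_univ, true_and, Fintype.mem_piFinset, Finset.ext_iff, mem_qsupp]
    refine forall_congr' fun j => ?_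
    by_cases hj : j ∈ K <;> simp [hj]
  rw [this, Fintype.card_piFinset]
  simp only [apply_ite card, card_erase_of_mem (mem_univ _), card_univ, Fintype.card_fin,
    card_singleton, prod_ite_mem, univ_inter, prod_const]

theorem card_filter_qwt_eq (k : ℕ) :
    #{z : Fin n → Fin q | qwt z = k} = (q - 1) ^ k * n.choose k := by
  rw [card_eq_sum_card_fiberwise (s := {z : Fin n → Fin q | qwt z = k}) (f := qsupp)
      (t := univ.powersetCard k) fun z hz =>
      mem_powersetCard.2 ⟨subset_univ _, (mem_filter.1 hz).2⟩]
  calc _ = ∑ _K ∈ univ.powersetCard k, (q - 1) ^ k := sum_congr rfl fun K hK => by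
        rw [filter_filter, ← (mem_powersetCard.1 hK).2, ← card_filter_qsupp_eq K]
        exact congrArg card <|
          filter_congr fun z _ => ⟨And.right, fun h => ⟨by rw [qwt, h], h⟩⟩
    _ = _ := by simp [mul_comm]

def wordShadow (P : Finset (Fin n → Fin q)) (k : ℕ) : Finset (Fin n → Fin q) :=
  P.biUnion fun x => ((qsupp x).powersetCard k).image fun K => K.piecewise x 0

variable {P P' : Finset (Fin n → Fin q)} {k : ℕ}

theorem qwt_of_mem_wordShadow {z : Fin n → Fin q} (hz : z ∈ wordShadow P k) : qwt z = k := by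
  obtain ⟨x, -, hx⟩ := mem_biUnion.1 hz
  obtain ⟨K, hK, rfl⟩ := mem_image.1 hx
  rw [qwt, qsupp_piecewise (mem_powersetCard.1 hK).1, (mem_powersetCard.1 hK).2]

theorem exists_hammingDist_le_of_mem_wordShadow {z : Fin n → Fin q}
    (hz : z ∈ wordShadow P k) : ∃ x ∈ P, hammingDist x z ≤ qwt x - k := by
  obtain ⟨x, hxP, hx⟩ := mem_biUnion.1 hz
  obtain ⟨K, hK, rfl⟩ := mem_image.1 hx
  refine ⟨x, hxP, (hammingDist_piecewise_le x K).trans_eq ?_⟩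
  rw [card_sdiff_of_subset (mem_powersetCard.1 hK).1, (mem_powersetCard.1 hK).2, qwt]

theorem image_qsupp_wordShadow :
    (wordShadow P k).image qsupp = P.biUnion fun x => (qsupp x).powersetCard k := by
  rw [wordShadow, biUnion_image]
  refine biUnion_congr rfl fun x _ => ?_
  rw [image_image]
  exact (image_congr fun K hK => qsupp_piecewise (mem_powersetCard.1 hK).1).trans image_id

theorem disjoint_wordShadow {w e : ℕ} (hP : ∀ x ∈ P, qwt x ≤ w) (hP' : ∀ y ∈ P', qwt y ≤ w)
    (hwk : w ≤ k + e) (hdist : ∀ x ∈ P, ∀ y ∈ P', 2 * e + 1 ≤ hammingDist x y) :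
    Disjoint (wordShadow P k) (wordShadow P' k) := by
  refine disjoint_left.2 fun z hz hz' => ?_
  obtain ⟨x, hx, hxz⟩ := exists_hammingDist_le_of_mem_wordShadow hz
  obtain ⟨y, hy, hyz⟩ := exists_hammingDist_le_of_mem_wordShadow hz'
  have := hammingDist_triangle_right x y z
  have := hdist x hx y hy
  have := hP x hx
  have := hP' y hy
  omega

theorem choose_le_card_wordShadow {t w : ℕ}
    (hA : ∀ T : Finset (Fin n), #T = t → ∃ x ∈ P, Disjoint (qsupp x) T)
    (hw : ∀ x ∈ P, qwt x = w) (ht : t ≤ n) (hk : 1 ≤ k) (hkw : k < w)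
    (hcond : (w - t - 1).choose k + (w + t).choose k ≤ 2 * w.choose k) :
    (w + t).choose k ≤ #(wordShadow P k) := calc
  _ ≤ #((P.image qsupp).biUnion (powersetCard k)) := by
    refine Avoids.choose_le_card_biUnion_powersetCard (fun T hT => ?_) ?_ (by simpa) hk hkw
      hcond
    · obtain ⟨x, hx, hxT⟩ := hA T hT
      exact ⟨qsupp x, mem_image_of_mem _ hx, hxT⟩
    · rw [coe_image]
      rintro _ ⟨x, hx, rfl⟩
      exact hw x hx
  _ = #((wordShadow P k).image qsupp) := by rw [image_qsupp_wordShadow, image_biUnion]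
  _ ≤ _ := card_image_le

end QaryWords

theorem qary_cpecc_upper_bound_general (q n t w e b : ℕ) (hq : 2 ≤ q)
    (he : 1 ≤ e) (hew : e + 1 ≤ w)
    (hcond : (w - t - 1).choose (w - e) + (w + t).choose (w - e) ≤
      2 * w.choose (w - e))
    (hn : t ≤ n)
    (P : Fin b → Finset (Fin n → Fin q)) (hP : IsQaryLPECC q n t w e P)
    (hconst : ∀ i, ∀ x ∈ P i, qwt x = w) :
    b * (w + t).choose (w - e) ≤ (q - 1) ^ (w - e) * n.choose (w - e) := by
  have : NeZero q := ⟨by omega⟩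
  obtain ⟨-, -, hA, hB, hC⟩ := hP
  have hdisj : ((univ : Finset (Fin b)) : Set (Fin b)).PairwiseDisjoint
      fun i => wordShadow (P i) (w - e) := fun i _ j _ hij =>
    disjoint_wordShadow (hB i) (hB j) (by omega) (hC i j hij)
  calc b * (w + t).choose (w - e) = ∑ _i : Fin b, (w + t).choose (w - e) := by simp
    _ ≤ ∑ i, #(wordShadow (P i) (w - e)) := sum_le_sum fun i _ =>
      choose_le_card_wordShadow (fun T hT => hA T hT i) (hconst i) hn (by omega) (by omega) hcond
    _ = #(univ.biUnion fun i => wordShadow (P i) (w - e)) := (card_biUnion hdisj).symm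
    _ ≤ #{z : Fin n → Fin q | qwt z = w - e} := card_le_card <| biUnion_subset.2 fun i _ z hz =>
      mem_filter.2 ⟨mem_univ _, qwt_of_mem_wordShadow hz⟩
    _ = _ := card_filter_qwt_eq _

theorem qary_cpecc_upper_bound (q n t w e b : ℕ) (hq : 2 ≤ q) (ht : 1 ≤ t)
    (he : 1 ≤ e) (hew : e + 1 ≤ w)
    (hcond : (w - t - 1).choose (w - e) + (w + t).choose (w - e) ≤
      2 * w.choose (w - e))
    (hn : t ≤ n)
    (P : Fin b → Finset (Fin n → Fin q)) (hP : IsQaryLPECC q n t w e P)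
    (hconst : ∀ i, ∀ x ∈ P i, qwt x = w) :
    b * (w + t).choose (w - e) ≤ (q - 1) ^ (w - e) * n.choose (w - e) :=
  qary_cpecc_upper_bound_general q n t w e b hq he hew hcond hn P hP hconst
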